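/- arXiv:2103.16543 — 9 statements merged into one kernel-verified Lean document; each statement's English description precedes it below -/
import Mathlib

section
/- Three-dimensional representation of the Rule 54 cubic bulk algebra: For all ξ, ω ∈ ℂ, the matrices W₀(ξ,ω), W₁(ξ,ω), W′₀(ξ,ω), W′₁(ξ,ω), S satisfy S² = I₃ and, for all s₁, s₂, s₃ ∈ {0,1}, both the bulk relation W_{s₁}(ξ,ω) · S · W_{χ(s₁,s₂,s₃)}(ξ,ω) · W′_{s₃}(ξ,ω) = W_{s₁}(ξ,ω) · W′_{s₂}(ξ,ω) · W_{s₃}(ξ,ω) · S and the dual bulk relation W′_{s₁}(ξ,ω) · W_{χ(s₁,s₂,s₃)}(ξ,ω) · W′_{s₃}(ξ,ω) · S = W′_{s₁}(ξ,ω) · S · W′_{s₂}(ξ,ω) · W_{s₃}(ξ,ω). -/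
namespace Rule54

/-- Rule 54 local update. -/
def chi (a b c : ZMod 2) : ZMod 2 := a + b + c + a * c

/-- The auxiliary matrices `W₀(ξ,ω)`, `W₁(ξ,ω)`. -/
noncomputable def W (ξ ω : ℂ) : ZMod 2 → Matrix (Fin 3) (Fin 3) ℂ :=
  fun s => if s = 0 then !![1, 0, 0; ξ, 0, 0; 1, 0, 0] else !![0, ξ, 0; 0, 0, 1; 0, 0, ω]

/-- `W′_s(ξ,ω) = W_s(ω,ξ)`. -/
noncomputable def W' (ξ ω : ℂ) : ZMod 2 → Matrix (Fin 3) (Fin 3) ℂ := W ω ξ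

/-- The delimiter matrix `S`. -/
def S : Matrix (Fin 3) (Fin 3) ℂ := !![1, 0, 0; 0, 0, 1; 0, 1, 0]

theorem chi_chi (a b c : ZMod 2) : chi a (chi a b c) c = b := by
  revert a b c; decide

theorem W_zero (ξ ω : ℂ) : W ξ ω 0 = !![1, 0, 0; ξ, 0, 0; 1, 0, 0] := if_pos rfl

theorem W_one (ξ ω : ℂ) : W ξ ω 1 = !![0, ξ, 0; 0, 0, 1; 0, 0, ω] := if_neg one_ne_zero

theorem S_mul_self : S * S = 1 := by
  simp [S, Matrix.one_fin_three]

theorem bulk_relation (ξ ω : ℂ) (s₁ s₂ s₃ : ZMod 2) :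
    W ξ ω s₁ * S * W ξ ω (chi s₁ s₂ s₃) * W' ξ ω s₃ = W ξ ω s₁ * W' ξ ω s₂ * W ξ ω s₃ * S := by
  have zmod_two_cases : ∀ s : ZMod 2, s = 0 ∨ s = 1 := by decide
  obtain rfl | rfl := zmod_two_cases s₁ <;> obtain rfl | rfl := zmod_two_cases s₂ <;>
    obtain rfl | rfl := zmod_two_cases s₃ <;>
    simp [chi, CharTwo.add_self_eq_zero, W', W_zero, W_one, S, mul_comm, mul_left_comm]

/- Exchanging `ξ` and `ω` exchanges `W` and `W'`, and `chi s₁ · s₃` is an involution, so the dual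
relation is the bulk relation at `(ω, ξ)` with `s₂` replaced by `chi s₁ s₂ s₃`. -/
theorem dual_bulk_relation (ξ ω : ℂ) (s₁ s₂ s₃ : ZMod 2) :
    W' ξ ω s₁ * W ξ ω (chi s₁ s₂ s₃) * W' ξ ω s₃ * S = W' ξ ω s₁ * S * W' ξ ω s₂ * W ξ ω s₃ := by
  have h := bulk_relation ω ξ s₁ (chi s₁ s₂ s₃) s₃
  rw [chi_chi] at h
  exact h.symm

/-- Three-dimensional representation of the Rule 54 cubic bulk algebra. -/
theorem bulk_algebra_representation (ξ ω : ℂ) :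
    S * S = 1 ∧
    ∀ s1 s2 s3 : ZMod 2,
      W ξ ω s1 * S * W ξ ω (chi s1 s2 s3) * W' ξ ω s3
        = W ξ ω s1 * W' ξ ω s2 * W ξ ω s3 * S ∧
      W' ξ ω s1 * W ξ ω (chi s1 s2 s3) * W' ξ ω s3 * S
        = W' ξ ω s1 * S * W' ξ ω s2 * W ξ ω s3 :=
  ⟨S_mul_self, fun s₁ s₂ s₃ => ⟨bulk_relation ξ ω s₁ s₂ s₃, dual_bulk_relation ξ ω s₁ s₂ s₃⟩⟩

end Rule54
end

section
/- Right boundary vectors for conditional driving: Let γ, δ, Λ_R ∈ ℂ with δ ≠ 1 and Λ_R ≠ 0, and set ξ = Λ_R(γ − Λ_R)/(δ − 1) and ω = ((γ + δ − 1) − δΛ_R)/((δ − 1)Λ_R²). Define the column vectors in ℂ³: r′₀ = (γ(δ−1)Λ_R, (δ−1)δ, (δ−1)δΛ_R²)ᵀ, r′₁ = ((γ − γδ + δ − 1)Λ_R, −(δ−1)², −(δ−1)²Λ_R²)ᵀ, r₀₀ = (γ(δ−1)Λ_R, δ(γ + δ − δΛ_R − 1), (δ−1)δΛ_R²)ᵀ,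 r₀₁ = (−(δ−1)Λ_R(γ − Λ_R), −(δ−1)(γ + δ − δΛ_R − 1), −(δ−1)²Λ_R²)ᵀ, r₁₀ = (δΛ_R(γ − Λ_R), γ(δ−1)Λ_R, γΛ_R²(γ − Λ_R))ᵀ, r₁₁ = (−(γ−1)(δ−1)Λ_R, −(γ−1)(δ−1)Λ_R, −(γ−1)Λ_R²(γ − Λ_R))ᵀ. Then, with U^R = [[γ,γ,0,0],[1−γ,1−γ,0,0],[0,0,δ,δ],[0,0,1−δ,1−δ]] in the basis ordered (00,01,10,11), for all t₁, t₂, t₃ ∈ {0,1}: (a) Σ_{s₁,s₂∈{0,1}} (U^R)_{(t₁t₂),(s₁s₂)} r_{s₁s₂} = Λ_R · W′_{t₁}(ξ,ω) · S · r′_{t₂}, and (b) W′_{t₁}(ξ,ω) · W_{χ(t₁,t₂,t₃)}(ξ,ω) · r′_{t₃} = W′_{t₁}(ξ,ω) · S · r_{t₂t₃}. -/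
/-! Clearing denominators, the choice of `ξ` and `ω` amounts to the two polynomial relations
`ξ (δ - 1) = Λ_R (γ - Λ_R)` and `ω (δ - 1) Λ_R² = γ + δ - 1 - δ Λ_R`. Both boundary equations are
polynomial consequences of these relations: `U^R` only mixes `r_{t₁0}` and `r_{t₁1}`, and the
matrices `W₀`, `W₁`, `S` act by copying, scaling and permuting coordinates, so each of the finitely
many cases is a coordinatewise ideal-membership check. -/

namespace Rule54

/-- The conditional right-driving 4×4 stochastic matrix
`U^R = [[γ,γ,0,0],[1−γ,1−γ,0,0],[0,0,δ,δ],[0,0,1−δ,1−δ]]`,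
indexed by pairs of bits in the order (00,01,10,11). -/
noncomputable def URcond (γ δ : ℂ) : Matrix (ZMod 2 × ZMod 2) (ZMod 2 × ZMod 2) ℂ :=
  fun t s =>
    if t.1 = s.1 then
      if s.1 = 0 then (if t.2 = 0 then γ else 1 - γ)
      else (if t.2 = 0 then δ else 1 - δ)
    else 0

/-- The right boundary vectors `r′₀, r′₁`. -/
noncomputable def rv' (γ δ ΛR : ℂ) : ZMod 2 → Fin 3 → ℂ :=
  fun s =>
    if s = 0 then ![γ * (δ - 1) * ΛR, (δ - 1) * δ, (δ - 1) * δ * ΛR ^ 2]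
    else ![(γ - γ * δ + δ - 1) * ΛR, -(δ - 1) ^ 2, -(δ - 1) ^ 2 * ΛR ^ 2]

/-- The right boundary vectors `r₀₀, r₀₁, r₁₀, r₁₁`. -/
noncomputable def rv (γ δ ΛR : ℂ) : ZMod 2 × ZMod 2 → Fin 3 → ℂ :=
  fun s =>
    if s.1 = 0 then
      if s.2 = 0 then
        ![γ * (δ - 1) * ΛR, δ * (γ + δ - δ * ΛR - 1), (δ - 1) * δ * ΛR ^ 2]
      else
        ![-(δ - 1) * ΛR * (γ - ΛR), -(δ - 1) * (γ + δ - δ * ΛR - 1), -(δ - 1) ^ 2 * ΛR ^ 2]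
    else
      if s.2 = 0 then
        ![δ * ΛR * (γ - ΛR), γ * (δ - 1) * ΛR, γ * ΛR ^ 2 * (γ - ΛR)]
      else
        ![-(γ - 1) * (δ - 1) * ΛR, -(γ - 1) * (δ - 1) * ΛR, -(γ - 1) * ΛR ^ 2 * (γ - ΛR)]

open Matrix

lemma zmod_two_eq_zero_or_one : ∀ x : ZMod 2, x = 0 ∨ x = 1 := by
  decide

lemma sum_zmod_two {M : Type*} [AddCommMonoid M] (f : ZMod 2 → M) : ∑ x, f x = f 0 + f 1 :=
  Fin.sum_univ_two f

section MulVec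

variable {ξ ω : ℂ}

lemma W_zero_mulVec (v : Fin 3 → ℂ) : W ξ ω 0 *ᵥ v = ![v 0, ξ * v 0, v 0] := by
  ext i; fin_cases i <;> simp [W, mulVec, dotProduct, Fin.sum_univ_three]

lemma W_one_mulVec (v : Fin 3 → ℂ) : W ξ ω 1 *ᵥ v = ![ξ * v 1, v 2, ω * v 2] := by
  ext i; fin_cases i <;> simp [W, mulVec, dotProduct, Fin.sum_univ_three]

lemma S_mulVec (v : Fin 3 → ℂ) : S *ᵥ v = ![v 0, v 2, v 1] := by
  ext i; fin_cases i <;> simp [S, mulVec, dotProduct, Fin.sum_univ_three]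

end MulVec

lemma sum_URcond_smul {M : Type*} [AddCommMonoid M] [Module ℂ M] (γ δ : ℂ)
    (f : ZMod 2 × ZMod 2 → M) (t₁ t₂ : ZMod 2) :
    ∑ s₁ : ZMod 2, ∑ s₂ : ZMod 2, URcond γ δ (t₁, t₂) (s₁, s₂) • f (s₁, s₂)
      = URcond γ δ (t₁, t₂) (t₁, 0) • (f (t₁, 0) + f (t₁, 1)) := by
  rcases zmod_two_eq_zero_or_one t₁ with rfl | rfl <;>
    rcases zmod_two_eq_zero_or_one t₂ with rfl | rfl <;>
    simp [URcond, sum_zmod_two, smul_add]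

section BoundaryEquations

variable {γ δ ΛR ξ ω : ℂ}

lemma sum_URcond_smul_rv (hξ : ξ * (δ - 1) = ΛR * (γ - ΛR))
    (hω : ω * ((δ - 1) * ΛR ^ 2) = γ + δ - 1 - δ * ΛR) (t₁ t₂ : ZMod 2) :
    ∑ s₁ : ZMod 2, ∑ s₂ : ZMod 2, URcond γ δ (t₁, t₂) (s₁, s₂) • rv γ δ ΛR (s₁, s₂)
      = ΛR • (W' ξ ω t₁ * S) *ᵥ rv' γ δ ΛR t₂ := by
  rw [sum_URcond_smul, ← mulVec_mulVec, S_mulVec]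
  rcases zmod_two_eq_zero_or_one t₁ with rfl | rfl <;>
    rcases zmod_two_eq_zero_or_one t₂ with rfl | rfl <;> ext i <;> fin_cases i <;>
    simp only [URcond, rv, rv', W', W_zero_mulVec, W_one_mulVec, ↓reduceIte, one_ne_zero,
      add_cons, head_cons, tail_cons, empty_add_empty, Pi.smul_apply, smul_eq_mul, cons_val,
      cons_val_zero, cons_val_one, Fin.zero_eta, Fin.mk_one, Fin.reduceFinMk, Fin.isValue,
      Nat.succ_eq_add_one, Nat.reduceAdd] <;>
    grind

lemma W'_mul_W_chi_mulVec_rv' (hξ : ξ * (δ - 1) = ΛR * (γ - ΛR))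
    (hω : ω * ((δ - 1) * ΛR ^ 2) = γ + δ - 1 - δ * ΛR) (t₁ t₂ t₃ : ZMod 2) :
    (W' ξ ω t₁ * W ξ ω (chi t₁ t₂ t₃)) *ᵥ rv' γ δ ΛR t₃
      = (W' ξ ω t₁ * S) *ᵥ rv γ δ ΛR (t₂, t₃) := by
  simp only [← mulVec_mulVec, S_mulVec]
  rcases zmod_two_eq_zero_or_one t₁ with rfl | rfl <;>
    rcases zmod_two_eq_zero_or_one t₂ with rfl | rfl <;>
    rcases zmod_two_eq_zero_or_one t₃ with rfl | rfl <;> ext i <;> fin_cases i <;>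
    simp only [W', chi, rv, rv', W_zero_mulVec, W_one_mulVec, CharTwo.add_self_eq_zero, zero_add,
      add_zero, mul_zero, mul_one, ↓reduceIte, one_ne_zero, cons_val, cons_val_zero, cons_val_one,
      Fin.zero_eta, Fin.mk_one, Fin.reduceFinMk, Fin.isValue, Nat.succ_eq_add_one,
      Nat.reduceAdd] <;>
    grind

end BoundaryEquations

/-- Right boundary vectors for conditional driving solve the right boundary equations. -/
theorem right_boundary_vectors (γ δ ΛR : ℂ) (hδ : δ ≠ 1) (hR : ΛR ≠ 0)
    (ξ ω : ℂ) (hξ : ξ = ΛR * (γ - ΛR) / (δ - 1))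
    (hω : ω = ((γ + δ - 1) - δ * ΛR) / ((δ - 1) * ΛR ^ 2)) :
    ∀ t1 t2 t3 : ZMod 2,
      (∑ s1 : ZMod 2, ∑ s2 : ZMod 2, URcond γ δ (t1, t2) (s1, s2) • rv γ δ ΛR (s1, s2))
          = ΛR • (W' ξ ω t1 * S).mulVec (rv' γ δ ΛR t2) ∧
      (W' ξ ω t1 * W ξ ω (chi t1 t2 t3)).mulVec (rv' γ δ ΛR t3)
          = (W' ξ ω t1 * S).mulVec (rv γ δ ΛR (t2, t3)) := by
  have hδ1 : δ - 1 ≠ 0 := sub_ne_zero.mpr hδ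
  have hξ' : ξ * (δ - 1) = ΛR * (γ - ΛR) := hξ ▸ div_mul_cancel₀ _ hδ1
  have hω' : ω * ((δ - 1) * ΛR ^ 2) = γ + δ - 1 - δ * ΛR :=
    hω ▸ div_mul_cancel₀ _ (mul_ne_zero hδ1 (pow_ne_zero 2 hR))
  exact fun t₁ t₂ t₃ =>
    ⟨sum_URcond_smul_rv hξ' hω' t₁ t₂, W'_mul_W_chi_mulVec_rv' hξ' hω' t₁ t₂ t₃⟩

end Rule54
end

section
/- Characteristic equation of the NESS orbital: Let α, β, γ, δ, Λ_L, Λ_R ∈ ℂ with β ≠ 1, δ ≠ 1, Λ_L ≠ 0 and Λ_R ≠ 0. Suppose the spectral-parameter compatibility conditions hold: ((α + β − 1) − βΛ_L)/((β − 1)Λ_L²) = Λ_R(γ − Λ_R)/(δ − 1) and Λ_L(α − Λ_L)/(β − 1) = ((γ + δ − 1) − δΛ_R)/((δ − 1)Λ_R²). Then Λ := Λ_L·Λ_R satisfies (Λ − 1)·(Λ³ + (1 − αγ)Λ² + βδ·Λ − (α + β − 1)(γ + δ − 1)(Λ + 1)) = 0. -/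
/-!
Multiplying the first compatibility condition by `Λ_R` and the second by `Λ_L` turns them into
equations that are linear in `Λ_R` and in `Λ_L` respectively, with coefficients polynomial in
`Λ = Λ_L Λ_R`. Multiplying the two and cancelling a factor `Λ` leaves a quartic in `Λ` alone,
which is `(β - 1)(δ - 1)` times the claimed characteristic polynomial.
-/

section Rule54

variable {K : Type*} [Field K] {α β γ δ ΛL ΛR : K}

theorem right_param_mul_eq (hβ : β ≠ 1) (hδ : δ ≠ 1) (hL : ΛL ≠ 0)
    (h1 : ((α + β - 1) - β * ΛL) / ((β - 1) * ΛL ^ 2) = ΛR * (γ - ΛR) / (δ - 1)) :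
    ΛR * ((δ - 1) * (α + β - 1) + (β - 1) * (ΛL * ΛR) ^ 2)
      = ΛL * ΛR * ((β - 1) * γ * (ΛL * ΛR) + (δ - 1) * β) := by
  have hB : β - 1 ≠ 0 := sub_ne_zero.mpr hβ
  have hD : δ - 1 ≠ 0 := sub_ne_zero.mpr hδ
  have e1 := (div_eq_div_iff (mul_ne_zero hB (pow_ne_zero 2 hL)) hD).mp h1
  linear_combination ΛR * e1

theorem left_param_mul_eq (hβ : β ≠ 1) (hδ : δ ≠ 1) (hR : ΛR ≠ 0)
    (h2 : ΛL * (α - ΛL) / (β - 1) = ((γ + δ - 1) - δ * ΛR) / ((δ - 1) * ΛR ^ 2)) :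
    ΛL * ((δ - 1) * (ΛL * ΛR) ^ 2 + (β - 1) * (γ + δ - 1))
      = ΛL * ΛR * ((δ - 1) * α * (ΛL * ΛR) + (β - 1) * δ) := by
  have hB : β - 1 ≠ 0 := sub_ne_zero.mpr hβ
  have hD : δ - 1 ≠ 0 := sub_ne_zero.mpr hδ
  have e2 := (div_eq_div_iff hB (mul_ne_zero hD (pow_ne_zero 2 hR))).mp h2
  linear_combination -ΛL * e2

end Rule54

theorem characteristic_quartic_eq {R : Type*} [CommRing R] (α β γ δ Λ : R) :
    ((δ - 1) * (α + β - 1) + (β - 1) * Λ ^ 2) * ((δ - 1) * Λ ^ 2 + (β - 1) * (γ + δ - 1))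
      - Λ * ((β - 1) * γ * Λ + (δ - 1) * β) * ((δ - 1) * α * Λ + (β - 1) * δ)
      = (β - 1) * (δ - 1) * ((Λ - 1) * (Λ ^ 3 + (1 - α * γ) * Λ ^ 2 + β * δ * Λ
          - (α + β - 1) * (γ + δ - 1) * (Λ + 1))) := by
  ring

/-- Characteristic equation of the NESS orbital of the boundary-driven Rule 54 automaton:
if the spectral parameters obtained from the left and right boundary equations agree,
then `Λ = Λ_L Λ_R` is a root of the characteristic polynomial. -/
theorem ness_orbital_characteristic_equation
    (α β γ δ ΛL ΛR : ℂ) (hβ : β ≠ 1) (hδ : δ ≠ 1) (hL : ΛL ≠ 0) (hR : ΛR ≠ 0)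
    (h1 : ((α + β - 1) - β * ΛL) / ((β - 1) * ΛL ^ 2) = ΛR * (γ - ΛR) / (δ - 1))
    (h2 : ΛL * (α - ΛL) / (β - 1) = ((γ + δ - 1) - δ * ΛR) / ((δ - 1) * ΛR ^ 2)) :
    (ΛL * ΛR - 1) *
      ((ΛL * ΛR) ^ 3 + (1 - α * γ) * (ΛL * ΛR) ^ 2 + β * δ * (ΛL * ΛR)
        - (α + β - 1) * (γ + δ - 1) * (ΛL * ΛR + 1)) = 0 := by
  set Λ := ΛL * ΛR
  have hΛ0 : Λ ≠ 0 := mul_ne_zero hL hR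
  have hprod := congrArg₂ (· * ·)
    (right_param_mul_eq hβ hδ hL h1) (left_param_mul_eq hβ hδ hR h2)
  have hquartic : ((δ - 1) * (α + β - 1) + (β - 1) * Λ ^ 2) * ((δ - 1) * Λ ^ 2
      + (β - 1) * (γ + δ - 1)) = Λ * ((β - 1) * γ * Λ + (δ - 1) * β)
        * ((δ - 1) * α * Λ + (β - 1) * δ) := by
    refine mul_left_cancel₀ hΛ0 ?_
    linear_combination hprod
  have hBD : (β - 1) * (δ - 1) ≠ 0 := mul_ne_zero (sub_ne_zero.mpr hβ) (sub_ne_zero.mpr hδ)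
  refine (mul_eq_zero.mp ?_).resolve_left hBD
  rw [← characteristic_quartic_eq, hquartic, sub_self]
end

section
/- The two-parameter transfer matrix solves the patch-state-ansatz bulk equations: For ξ, ω ∈ ℂ let 𝒯(ξ,ω) be the 4×4 matrix, with rows and columns indexed by pairs of bits in the order (00,01,10,11), 𝒯(ξ,ω) = [[1,1,ξ,1],[ξω,ξω,1,ω],[ω,ω,ξω,ω],[ξ,ξ,ξ,ξω]], and set X_{s s′ t t′} := 𝒯(ξ,ω)_{(s s′),(t t′)} and X′_{s s′ t t′} := 𝒯(ω,ξ)_{(s s′),(t t′)}. Then for all s, s′, u, u′ ∈ {0,1} the two bulk equations hold: X′_{0 0 s s′} · X′_{s s′ u u′} · X′_{u u′ 0 0} · X′_{0 0 0 0} = X_{0 0 χ(0,s,s′) s′} · X_{χ(0,s,s′) s′ χ(s′,u,u′) u′} · X_{χ(s′,u,u′) u′ χ(u′,0,0) 0} · X_{χ(u′,0,0) 0 0 0}, and X_{0 0 0 0} · X_{0 0 s s′} · X_{s s′ u u′} · X_{u u′ 0 0} = X′_{0 0 0 χ(0,0,s)} · X′_{0 χ(0,0,s) s χ(s,s′,u)}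 · X′_{s χ(s,s′,u) u χ(u,u′,0)} · X′_{u χ(u,u′,0) 0 0}. -/
namespace Rule54

/-- Rule 54 local update on bits: `χ(s₁,s₂,s₃) = s₁ + s₂ + s₃ + s₁s₃ (mod 2)`. -/
def chiB (a b c : Bool) : Bool := xor a (xor b (xor c (a && c)))

/-- The two-parameter transfer matrix `𝒯(ξ,ω)` of the patch state ansatz, with rows and
columns indexed by pairs of bits in the order (00,01,10,11):
`𝒯(ξ,ω) = [[1,1,ξ,1],[ξω,ξω,1,ω],[ω,ω,ξω,ω],[ξ,ξ,ξ,ξω]]`. -/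
def Tm (ξ ω : ℂ) : Bool × Bool → Bool × Bool → ℂ
  | (false, false), (true, false) => ξ
  | (false, false), _ => 1
  | (false, true), (true, false) => 1
  | (false, true), (true, true) => ω
  | (false, true), _ => ξ * ω
  | (true, false), (true, false) => ξ * ω
  | (true, false), _ => ω
  | (true, true), (true, true) => ξ * ω
  | (true, true), _ => ξ

/-- `X_{s s′ t t′} = 𝒯(ξ,ω)_{(s s′),(t t′)}`; the primed tensor is `X′ = X` with `ξ,ω` swapped. -/
def X (ξ ω : ℂ) (a b c d : Bool) : ℂ := Tm ξ ω (a, b) (c, d)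

/-!
Every entry of `𝒯(ξ,ω)` is a monomial `ξ^i ω^j`, and `𝒯(ω,ξ)` has the swapped exponents `(j,i)`.
Hence each side of a bulk equation is a single monomial whose exponent pair is the sum of the
exponent pairs along the chain, and the equations reduce to identities between these sums over the
sixteen configurations `(s,s',u,u')`, checked by evaluation.
-/

section Monomial

variable {M : Type*} [CommMonoid M]

def monomial (x y : M) (e : ℕ × ℕ) : M := x ^ e.1 * y ^ e.2

theorem monomial_add (x y : M) (e f : ℕ × ℕ) :
    monomial x y (e + f) = monomial x y e * monomial x y f := by
  simp only [monomial, Prod.fst_add, Prod.snd_add, pow_add, mul_mul_mul_comm]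

theorem monomial_swap (x y : M) (e : ℕ × ℕ) : monomial y x e = monomial x y e.swap :=
  mul_comm _ _

end Monomial

def degTm : Bool × Bool → Bool × Bool → ℕ × ℕ
  | (false, false), (true, false) => (1, 0)
  | (false, false), _ => (0, 0)
  | (false, true), (true, false) => (0, 0)
  | (false, true), (true, true) => (0, 1)
  | (false, true), _ => (1, 1)
  | (true, false), (true, false) => (1, 1)
  | (true, false), _ => (0, 1)
  | (true, true), (true, true) => (1, 1)
  | (true, true), _ => (1, 0)

def degX (a b c d : Bool) : ℕ × ℕ := degTm (a, b) (c, d)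

theorem X_eq_monomial (ξ ω : ℂ) (a b c d : Bool) :
    X ξ ω a b c d = monomial ξ ω (degX a b c d) := by
  cases a <;> cases b <;> cases c <;> cases d <;> simp [X, Tm, degX, degTm, monomial]

theorem degX_bulk_primed (s s' u u' : Bool) :
    (degX false false s s' + degX s s' u u' + degX u u' false false
        + degX false false false false).swap
      = degX false false (chiB false s s') s'
        + degX (chiB false s s') s' (chiB s' u u') u'
        + degX (chiB s' u u') u' (chiB u' false false) false
        + degX (chiB u' false false) false false false := by
  revert s s' u u'
  decide

theorem degX_bulk_unprimed (s s' u u' : Bool) :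
    degX false false false false + degX false false s s' + degX s s' u u'
        + degX u u' false false
      = (degX false false false (chiB false false s)
        + degX false (chiB false false s) s (chiB s s' u)
        + degX s (chiB s s' u) u (chiB u u' false)
        + degX u (chiB u u' false) false false).swap := by
  revert s s' u u'
  decide

/-- The two-parameter transfer matrix solves the patch-state-ansatz bulk equations. -/
theorem transfer_matrix_solves_bulk_psa (ξ ω : ℂ) (s s' u u' : Bool) :
    X ω ξ false false s s' * X ω ξ s s' u u' * X ω ξ u u' false false
        * X ω ξ false false false false
      = X ξ ω false false (chiB false s s') s'
        * X ξ ω (chiB false s s') s' (chiB s' u u') u'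
        * X ξ ω (chiB s' u u') u' (chiB u' false false) false
        * X ξ ω (chiB u' false false) false false false ∧
    X ξ ω false false false false * X ξ ω false false s s' * X ξ ω s s' u u'
        * X ξ ω u u' false false
      = X ω ξ false false false (chiB false false s)
        * X ω ξ false (chiB false false s) s (chiB s s' u)
        * X ω ξ s (chiB s s' u) u (chiB u u' false)
        * X ω ξ u (chiB u u' false) false false := by
  simp only [X_eq_monomial, ← monomial_add, monomial_swap ξ ω]
  exact ⟨congrArg _ (degX_bulk_primed s s' u u'), congrArg _ (degX_bulk_unprimed s s' u u')⟩

end Rule54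
end

section
/- Explicit leading eigenvectors of the Rule 54 transfer matrix: Let ξ, ω, λ ∈ ℂ satisfy λ³ − (1 + 3ξω)λ² − (ξ + ω + ξω(1 − 3ξω))λ − ξω(1 − ξω)² = 0. Then the row vector l = (ω((λ − ξω)² − ξω), ω²(λ − ξω + ξ), ξω(λ − ξω + ω)) and the column vector r = (ω(λ − ξω + ξ), (λ − ξω)² − λ − ξ, ω(λ − ξω + ω))ᵀ satisfy l·T(ξ,ω) = λ·l and T(ξ,ω)·r = λ·r, where T(ξ,ω) = [[1+ξω, ω, ξ],[1+ξ, ξω, ξ],[1+ω, ω, ξω]]. -/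
/-!
The column vector `r` is the second column of `adj(λ - T(ξ,ω))` and the row vector `l` is `ω`
times its first row. Since `(λ - T) · adj(λ - T) = det(λ - T) · 1`, applying `λ - T` to them
gives zero in all but one coordinate, where it gives (`ω` times) the characteristic polynomial
at `λ`.
-/

namespace Rule54

/-- The Rule 54 Gibbs transfer matrix `T(ξ,ω)`. -/
noncomputable def T3 (ξ ω : ℂ) : Matrix (Fin 3) (Fin 3) ℂ :=
  !![1 + ξ * ω, ω, ξ; 1 + ξ, ξ * ω, ξ; 1 + ω, ω, ξ * ω]

/-- The characteristic polynomial `det (λ - T(ξ,ω))`, evaluated at `lam`. -/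
def charCubic (ξ ω lam : ℂ) : ℂ :=
  lam ^ 3 - (1 + 3 * ξ * ω) * lam ^ 2
    - (ξ + ω + ξ * ω * (1 - 3 * ξ * ω)) * lam - ξ * ω * (1 - ξ * ω) ^ 2

def leftEigvec (ξ ω lam : ℂ) : Fin 3 → ℂ :=
  ![ω * ((lam - ξ * ω) ^ 2 - ξ * ω), ω ^ 2 * (lam - ξ * ω + ξ), ξ * ω * (lam - ξ * ω + ω)]

def rightEigvec (ξ ω lam : ℂ) : Fin 3 → ℂ :=
  ![ω * (lam - ξ * ω + ξ), (lam - ξ * ω) ^ 2 - lam - ξ, ω * (lam - ξ * ω + ω)]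

theorem vecMul_T3 (ξ ω a b c : ℂ) :
    Matrix.vecMul ![a, b, c] (T3 ξ ω) =
      ![a * (1 + ξ * ω) + b * (1 + ξ) + c * (1 + ω), a * ω + b * (ξ * ω) + c * ω,
        a * ξ + b * ξ + c * (ξ * ω)] := by
  ext i
  fin_cases i <;> simp [T3, Matrix.vecMul, dotProduct, Fin.sum_univ_three]

theorem T3_mulVec (ξ ω a b c : ℂ) :
    (T3 ξ ω).mulVec ![a, b, c] =
      ![(1 + ξ * ω) * a + ω * b + ξ * c, (1 + ξ) * a + ξ * ω * b + ξ * c,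
        (1 + ω) * a + ω * b + ξ * ω * c] := by
  ext i
  fin_cases i <;> simp [T3, Matrix.mulVec, dotProduct, Fin.sum_univ_three]

theorem vecMul_leftEigvec (ξ ω lam : ℂ) :
    Matrix.vecMul (leftEigvec ξ ω lam) (T3 ξ ω) =
      lam • leftEigvec ξ ω lam - Pi.single 0 (ω * charCubic ξ ω lam) := by
  rw [leftEigvec, vecMul_T3]
  ext i
  fin_cases i <;> simp [charCubic] <;> ring

theorem T3_mulVec_rightEigvec (ξ ω lam : ℂ) :
    (T3 ξ ω).mulVec (rightEigvec ξ ω lam) =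
      lam • rightEigvec ξ ω lam - Pi.single 1 (charCubic ξ ω lam) := by
  rw [rightEigvec, T3_mulVec]
  ext i
  fin_cases i <;> simp [charCubic] <;> ring

/-- Explicit leading left and right eigenvectors of the Rule 54 transfer matrix. -/
theorem transfer_matrix_eigenvectors (ξ ω lam : ℂ)
    (hlam : lam ^ 3 - (1 + 3 * ξ * ω) * lam ^ 2
      - (ξ + ω + ξ * ω * (1 - 3 * ξ * ω)) * lam - ξ * ω * (1 - ξ * ω) ^ 2 = 0) :
    Matrix.vecMul
        ![ω * ((lam - ξ * ω) ^ 2 - ξ * ω), ω ^ 2 * (lam - ξ * ω + ξ),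
          ξ * ω * (lam - ξ * ω + ω)] (T3 ξ ω)
      = lam • ![ω * ((lam - ξ * ω) ^ 2 - ξ * ω), ω ^ 2 * (lam - ξ * ω + ξ),
          ξ * ω * (lam - ξ * ω + ω)] ∧
    (T3 ξ ω).mulVec
        ![ω * (lam - ξ * ω + ξ), (lam - ξ * ω) ^ 2 - lam - ξ, ω * (lam - ξ * ω + ω)]
      = lam • ![ω * (lam - ξ * ω + ξ), (lam - ξ * ω) ^ 2 - lam - ξ,
          ω * (lam - ξ * ω + ω)] := by
  have hcubic : charCubic ξ ω lam = 0 := hlam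
  have hleft := vecMul_leftEigvec ξ ω lam
  have hright := T3_mulVec_rightEigvec ξ ω lam
  rw [hcubic, mul_zero, Pi.single_zero, sub_zero] at hleft
  rw [hcubic, Pi.single_zero, sub_zero] at hright
  exact ⟨hleft, hright⟩

end Rule54
end

section
/- Closed-form expansion of the Rule 54 partition function: For every integer k ≥ 1, the identity trace(T(ξ,ω)^k) = Σ_{x=0}^{k} Σ_{y=0}^{k} α_k(x,y)·ξ^x·ω^y holds as an identity of polynomials in ℤ[ξ,ω], where α_k(x,y) := (k(k+x+y)/((k+x−y)(k−x+y)))·C(k+x−y, y)·C(k−x+y, x) if k+x−y > 0 and k−x+y > 0, and α_k(x,y) := 0 otherwise (these rational expressions are integers), and T(ξ,ω) = [[1+ξω, ω, ξ],[1+ξ, ξω, ξ],[1+ω, ω, ξω]]. -/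
/-!
By Cayley–Hamilton, `t k = tr T(ξ,ω)^k` satisfies
`t (k+3) = (1+3ξω) t (k+2) + (ξω+ξ+ω-3ξ²ω²) t (k+1) + ξω(ξω-1)² t k`, so it suffices to check
`k = 1, 2, 3` and that the coefficients `α_k(x,y)` satisfy the matching recurrence in `(k, x, y)`.
In the variables `a = k+x-y`, `b = k-x+y`, `α_k(x,y)` is the integer
`C(a,y)C(b,x) + C(a,y)C(b-1,x-1) + C(b,x)C(a-1,y-1)`, and each of these three products satisfies
the recurrence by Pascal's rule, except near `a = 0` or `b = 0`, where only finitely many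
coefficients are nonzero and are checked by computation.
-/

namespace Rule54

/-- The coefficient `α_k(x,y)` of the Rule 54 partition function:
`α_k(x,y) = (k(k+x+y)/((k+x−y)(k−x+y)))·C(k+x−y, y)·C(k−x+y, x)` whenever
`k+x−y > 0` and `k−x+y > 0`, and `0` otherwise. -/
def alphaQ (k x y : ℕ) : ℚ :=
  if 0 < (k : ℤ) + x - y ∧ 0 < (k : ℤ) - x + y then
    ((k : ℚ) * ((k : ℚ) + x + y))
        / ((((k : ℤ) + x - y : ℤ) : ℚ) * (((k : ℤ) - x + y : ℤ) : ℚ))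
      * (Nat.choose ((k : ℤ) + x - y).toNat y : ℚ)
      * (Nat.choose ((k : ℤ) - x + y).toNat x : ℚ)
  else 0

open Finset

def intChoose (n r : ℤ) : ℤ := if 0 ≤ r ∧ r ≤ n then (n.toNat.choose r.toNat : ℤ) else 0

theorem intChoose_of_neg {n r : ℤ} (h : r < 0) : intChoose n r = 0 := by
  simp [intChoose]; omega

theorem intChoose_of_lt {n r : ℤ} (h : n < r) : intChoose n r = 0 := by
  simp [intChoose]; omega

@[simp, norm_cast]
theorem intChoose_natCast (a b : ℕ) : intChoose a b = a.choose b := by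
  by_cases h : b ≤ a
  · simp [intChoose, h]
  · simp [intChoose_of_lt (by omega : (a : ℤ) < b), Nat.choose_eq_zero_of_lt (by omega : a < b)]

theorem intChoose_succ {n : ℤ} (hn : 0 ≤ n) (r : ℤ) :
    intChoose (n + 1) r = intChoose n r + intChoose n (r - 1) := by
  lift n to ℕ using hn
  rcases lt_or_ge r 0 with hr | hr
  · simp [intChoose_of_neg, hr, show r - 1 < 0 by omega]
  lift r to ℕ using hr
  cases r with
  | zero => simp [intChoose]; omega
  | succ r =>
    rw [show ((r + 1 : ℕ) : ℤ) - 1 = r by push_cast; ring, add_comm (intChoose _ _)]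
    exact_mod_cast Nat.choose_succ_succ' n r

theorem mul_intChoose_sub_one (n r : ℤ) : n * intChoose (n - 1) (r - 1) = r * intChoose n r := by
  rcases lt_or_ge r 1 with hr | hr
  · rw [intChoose_of_neg (by omega : r - 1 < 0)]
    rcases lt_or_ge r 0 with hr' | hr'
    · simp [intChoose_of_neg hr']
    · simp [show r = 0 by omega]
  rcases lt_or_ge n 1 with hn | hn
  · simp [intChoose_of_lt (by omega : n < r), intChoose_of_lt (by omega : n - 1 < r - 1)]
  obtain ⟨a, rfl⟩ : ∃ a : ℕ, n = a + 1 := ⟨(n - 1).toNat, by omega⟩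
  obtain ⟨b, rfl⟩ : ∃ b : ℕ, r = b + 1 := ⟨(r - 1).toNat, by omega⟩
  simp only [add_sub_cancel_right]
  rw [mul_comm (b + 1 : ℤ)]
  exact_mod_cast Nat.add_one_mul_choose_eq a b

theorem intChoose_eq_choose_toNat {n : ℤ} (hn : 0 ≤ n) (r : ℕ) :
    intChoose n r = n.toNat.choose r := by
  rw [← intChoose_natCast, Int.toNat_of_nonneg hn]

/-- The coefficient of `ξ^x ω^y` in the trace recurrence, when `α_{k+i}(x', y')` is written as
`F a b x' y'` with `a = k+i+x'-y'`, `b = k+i-x'+y'`; here `A = k+x-y` and `B = k-x+y`. -/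
def CoeffRecurrence (F : ℤ → ℤ → ℤ → ℤ → ℤ) (A B x y : ℤ) : Prop :=
  F (A + 3) (B + 3) x y =
    F (A + 2) (B + 2) x y + 3 * F (A + 2) (B + 2) (x - 1) (y - 1)
      + F (A + 1) (B + 1) (x - 1) (y - 1) - 3 * F (A + 1) (B + 1) (x - 2) (y - 2)
      + F A (B + 2) (x - 1) y + F (A + 2) B x (y - 1)
      + F A B (x - 1) (y - 1) - 2 * F A B (x - 2) (y - 2) + F A B (x - 3) (y - 3)

/-- The coefficient of `ξ^x ω^y` in `(1+ξ)^B (1+ω)^A` times the identity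
`(1+ξ)³(1+ω)³ = (1+ξ)²(1+ω)²(1+3ξω) + (1+ξ)(1+ω)(ξω-3ξ²ω²) + ξ(1+ξ)² + ω(1+ω)²`
`+ ξω - 2ξ²ω² + ξ³ω³`. -/
theorem coeffRecurrence_choose_mul_choose {A B : ℤ} (hA : 0 ≤ A) (hB : 0 ≤ B) (x y : ℤ) :
    CoeffRecurrence (fun a b x y => intChoose a y * intChoose b x) A B x y := by
  simp only [CoeffRecurrence]
  rw [show A + 3 = A + 1 + 1 + 1 by ring, show A + 2 = A + 1 + 1 by ring,
    show B + 3 = B + 1 + 1 + 1 by ring, show B + 2 = B + 1 + 1 by ring]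
  simp (disch := omega) only [intChoose_succ]
  ring_nf

/-- Equal to `α_k(x,y)` for `a = k+x-y`, `b = k-x+y > 0`, by `b·C(b-1,x-1) = x·C(b,x)` and
`ab + xa + yb = k(k+x+y)`. -/
def alphaAB (a b x y : ℤ) : ℤ :=
  intChoose a y * intChoose b x + intChoose a y * intChoose (b - 1) (x - 1)
    + intChoose b x * intChoose (a - 1) (y - 1)

theorem alphaAB_comm (a b x y : ℤ) : alphaAB a b x y = alphaAB b a y x := by
  simp only [alphaAB]; ring

theorem alphaAB_eq_zero_of_lt {a y : ℤ} (b x : ℤ) (h : a < y) : alphaAB a b x y = 0 := by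
  simp [alphaAB, intChoose_of_lt h, intChoose_of_lt (by omega : a - 1 < y - 1)]

theorem alphaAB_eq_zero_of_neg {x : ℤ} (a b y : ℤ) (h : x < 0) : alphaAB a b x y = 0 := by
  simp [alphaAB, intChoose_of_neg h, intChoose_of_neg (by omega : x - 1 < 0)]

theorem coeffRecurrence_alphaAB {A B : ℤ} (hA : 1 ≤ A) (hB : 1 ≤ B) (x y : ℤ) :
    CoeffRecurrence alphaAB A B x y := by
  have h₀ := coeffRecurrence_choose_mul_choose (by omega : 0 ≤ A) (by omega : 0 ≤ B) x y
  have h₁ := coeffRecurrence_choose_mul_choose (by omega : 0 ≤ A) (by omega : 0 ≤ B - 1) (x - 1) y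
  have h₂ := coeffRecurrence_choose_mul_choose (by omega : 0 ≤ A - 1) (by omega : 0 ≤ B) x (y - 1)
  simp only [CoeffRecurrence, alphaAB] at *
  linear_combination (norm := ring_nf) h₀ + h₁ + h₂

theorem coeffRecurrence_alphaAB_comm {A B x y : ℤ} (h : CoeffRecurrence alphaAB B A y x) :
    CoeffRecurrence alphaAB A B x y := by
  simp only [CoeffRecurrence] at *
  simp only [alphaAB_comm _ _ x, alphaAB_comm _ _ (x - 1), alphaAB_comm _ _ (x - 2),
    alphaAB_comm _ _ (x - 3)]
  linear_combination h

instance (F : ℤ → ℤ → ℤ → ℤ → ℤ) (A B x y : ℤ) : Decidable (CoeffRecurrence F A B x y) :=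
  inferInstanceAs (Decidable (_ = _))

theorem coeffRecurrence_alphaAB_small :
    ∀ k < (3 : ℕ), ∀ x < (3 : ℕ), ∀ y < (4 : ℕ),
      CoeffRecurrence alphaAB ((k + 1 : ℕ) + x - y) ((k + 1 : ℕ) - x + y) (x : ℤ) y := by
  decide

/-- Pascal's rule `C(n+1,r) = C(n,r) + C(n,r-1)` fails at `n = -1`, so the boundary `a ≤ 0` is
handled directly: all terms vanish unless `0 ≤ x` and `y ≤ a + 3 ≤ 3`. -/
theorem coeffRecurrence_alphaAB_of_le {k : ℕ} (hk : 1 ≤ k) {x y : ℤ} (h : k + x ≤ y) :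
    CoeffRecurrence alphaAB (k + x - y) (k - x + y) x y := by
  rcases lt_or_ge x 0 with hx | hx
  · simp (disch := omega) [CoeffRecurrence, alphaAB_eq_zero_of_neg]
  rcases lt_or_ge (k + x - y + 3) y with hy | hy
  · simp (disch := omega) [CoeffRecurrence, alphaAB_eq_zero_of_lt]
  lift x to ℕ using hx
  lift y to ℕ using (by omega)
  obtain ⟨k, rfl⟩ : ∃ k' : ℕ, k = k' + 1 := ⟨k - 1, by omega⟩
  exact coeffRecurrence_alphaAB_small k (by omega) x (by omega) y (by omega)

theorem coeffRecurrence_alphaAB_of_one_le {k : ℕ} (hk : 1 ≤ k) (x y : ℤ) :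
    CoeffRecurrence alphaAB (k + x - y) (k - x + y) x y := by
  rcases le_or_gt (k + x - y) 0 with hA | hA
  · exact coeffRecurrence_alphaAB_of_le hk (by omega)
  rcases le_or_gt (k - x + y) 0 with hB | hB
  · apply coeffRecurrence_alphaAB_comm
    rw [show (k : ℤ) - x + y = k + y - x by ring, show (k : ℤ) + x - y = k - y + x by ring]
    exact coeffRecurrence_alphaAB_of_le hk (by omega)
  exact coeffRecurrence_alphaAB hA hB x y

def alphaZ (k : ℕ) (x y : ℤ) : ℤ := alphaAB (k + x - y) (k - x + y) x y

theorem alphaZ_recurrence {k : ℕ} (hk : 1 ≤ k) (x y : ℤ) :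
    alphaZ (k + 3) x y =
      alphaZ (k + 2) x y + 3 * alphaZ (k + 2) (x - 1) (y - 1)
        + alphaZ (k + 1) (x - 1) (y - 1) - 3 * alphaZ (k + 1) (x - 2) (y - 2)
        + alphaZ (k + 1) (x - 1) y + alphaZ (k + 1) x (y - 1)
        + alphaZ k (x - 1) (y - 1) - 2 * alphaZ k (x - 2) (y - 2) + alphaZ k (x - 3) (y - 3) := by
  have h := coeffRecurrence_alphaAB_of_one_le hk x y
  simp only [CoeffRecurrence] at h
  simp only [alphaZ]
  push_cast
  linear_combination (norm := ring_nf) h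

theorem alphaZ_eq_zero (m : ℕ) (x y : ℤ) (h : x < 0 ∨ m < x ∨ y < 0 ∨ m < y) :
    alphaZ m x y = 0 := by
  unfold alphaZ
  by_cases hay : (m : ℤ) + x - y < y
  · exact alphaAB_eq_zero_of_lt _ _ hay
  rw [alphaAB_comm]
  by_cases hbx : (m : ℤ) - x + y < x
  · exact alphaAB_eq_zero_of_lt _ _ hbx
  rcases lt_or_ge x 0 with hx | hx
  · rw [alphaAB_comm]; exact alphaAB_eq_zero_of_neg _ _ _ hx
  · exact alphaAB_eq_zero_of_neg _ _ _ (by omega)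

theorem alphaQ_eq_alphaZ {k : ℕ} (hk : 1 ≤ k) (x y : ℕ) : alphaQ k x y = alphaZ k x y := by
  unfold alphaQ alphaZ
  split_ifs with h
  · obtain ⟨ha, hb⟩ := h
    set a : ℤ := k + x - y
    set b : ℤ := k - x + y
    have hca : ((a.toNat.choose y : ℕ) : ℚ) = intChoose a y := by
      exact_mod_cast (intChoose_eq_choose_toNat ha.le y).symm
    have hcb : ((b.toNat.choose x : ℕ) : ℚ) = intChoose b x := by
      exact_mod_cast (intChoose_eq_choose_toNat hb.le x).symm
    have hxb : (b : ℚ) * intChoose (b - 1) (x - 1) = x * intChoose b x := by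
      exact_mod_cast mul_intChoose_sub_one b x
    have hya : (a : ℚ) * intChoose (a - 1) (y - 1) = y * intChoose a y := by
      exact_mod_cast mul_intChoose_sub_one a y
    have hab : (k : ℚ) * (k + x + y) = a * b + x * a + y * b := by simp only [a, b]; push_cast; ring
    rw [hca, hcb, hab, div_mul_eq_mul_div, div_mul_eq_mul_div, div_eq_iff (by positivity)]
    unfold alphaAB
    push_cast
    linear_combination (-(a : ℚ) * intChoose a y) * hxb - (b * intChoose b x) * hya
  · rcases not_and_or.mp h with ha | hb
    · rw [alphaAB_eq_zero_of_lt _ _ (show (k : ℤ) + x - y < y by omega), Int.cast_zero]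
    · rw [alphaAB_comm, alphaAB_eq_zero_of_lt _ _ (show (k : ℤ) - x + y < x by omega),
        Int.cast_zero]

theorem sum_range_sum_range_eq {M : Type*} [AddCommMonoid M] {t : ℕ → ℕ → M} {X Y N : ℕ}
    (hX : ∀ x ≥ X, ∀ y, t x y = 0) (hY : ∀ x, ∀ y ≥ Y, t x y = 0) (hXN : X ≤ N) (hYN : Y ≤ N) :
    ∑ x ∈ range N, ∑ y ∈ range N, t x y = ∑ x ∈ range X, ∑ y ∈ range Y, t x y := by
  rw [eventually_constant_sum (fun x hx => sum_eq_zero fun y _ => hX x hx y) hXN]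
  exact sum_congr rfl fun x _ => eventually_constant_sum (hY x) hYN

section GenSum

variable {R : Type*} [CommRing R]

def genSum (N : ℕ) (f : ℤ → ℤ → ℤ) (ξ ω : R) : R :=
  ∑ x ∈ range N, ∑ y ∈ range N, (f x y : R) * ξ ^ x * ω ^ y

variable {f : ℤ → ℤ → ℤ} {m : ℕ}

theorem genSum_eq_of_lt (hf : ∀ x y : ℤ, x < 0 ∨ m < x ∨ y < 0 ∨ m < y → f x y = 0) {N : ℕ}
    (hN : m < N) (ξ ω : R) : genSum N f ξ ω = genSum (m + 1) f ξ ω :=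
  sum_range_sum_range_eq (fun x hx y => by simp [hf x y (by omega)])
    (fun x y hy => by simp [hf x y (by omega)]) hN hN

theorem genSum_shift (hf : ∀ x y : ℤ, x < 0 ∨ m < x ∨ y < 0 ∨ m < y → f x y = 0) {N p q : ℕ}
    (hp : m + p < N) (hq : m + q < N) (ξ ω : R) :
    genSum N (fun x y => f (x - p) (y - q)) ξ ω = ξ ^ p * ω ^ q * genSum N f ξ ω :=
  calc genSum N (fun x y => f (x - p) (y - q)) ξ ω
      = ∑ x ∈ range (p + (m + 1)), ∑ y ∈ range (q + (m + 1)),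
          (f (x - p) (y - q) : R) * ξ ^ x * ω ^ y :=
        sum_range_sum_range_eq (fun x hx y => by simp [hf (x - p) (y - q) (by omega)])
          (fun x y hy => by simp [hf (x - p) (y - q) (by omega)]) (by omega) (by omega)
    _ = ∑ x ∈ range (m + 1), ∑ y ∈ range (m + 1), (f x y : R) * ξ ^ (p + x) * ω ^ (q + y) := by
        rw [sum_range_add, sum_eq_zero fun x hx => ?_, zero_add]
        · refine sum_congr rfl fun x _ => ?_
          rw [sum_range_add, sum_eq_zero fun y hy => ?_, zero_add]
          · simp
          · simp [hf x (y - q) (by simp at hy; omega)]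
        · exact sum_eq_zero fun y _ => by simp [hf (x - p) (y - q) (by simp at hx; omega)]
    _ = ξ ^ p * ω ^ q * genSum N f ξ ω := by
        rw [genSum_eq_of_lt hf (by omega : m < N)]
        simp only [genSum, mul_sum, pow_add]
        exact sum_congr rfl fun x _ => sum_congr rfl fun y _ => by ring

end GenSum

theorem genSum_alphaZ_recurrence {R : Type*} [CommRing R] {k : ℕ} (hk : 1 ≤ k) (ξ ω : R) :
    genSum (k + 4) (alphaZ (k + 3)) ξ ω =
      (1 + 3 * ξ * ω) * genSum (k + 4) (alphaZ (k + 2)) ξ ω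
        + (ξ * ω + ξ + ω - 3 * ξ ^ 2 * ω ^ 2) * genSum (k + 4) (alphaZ (k + 1)) ξ ω
        + ξ * ω * (ξ * ω - 1) ^ 2 * genSum (k + 4) (alphaZ k) ξ ω := by
  -- shifts are written `x - (p : ℕ)`, the form used by `genSum_shift`
  have hsplit : genSum (k + 4) (alphaZ (k + 3)) ξ ω =
      genSum (k + 4) (alphaZ (k + 2)) ξ ω
        + 3 * genSum (k + 4) (fun x y => alphaZ (k + 2) (x - (1 : ℕ)) (y - (1 : ℕ))) ξ ω
        + genSum (k + 4) (fun x y => alphaZ (k + 1) (x - (1 : ℕ)) (y - (1 : ℕ))) ξ ω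
        - 3 * genSum (k + 4) (fun x y => alphaZ (k + 1) (x - (2 : ℕ)) (y - (2 : ℕ))) ξ ω
        + genSum (k + 4) (fun x y => alphaZ (k + 1) (x - (1 : ℕ)) (y - (0 : ℕ))) ξ ω
        + genSum (k + 4) (fun x y => alphaZ (k + 1) (x - (0 : ℕ)) (y - (1 : ℕ))) ξ ω
        + genSum (k + 4) (fun x y => alphaZ k (x - (1 : ℕ)) (y - (1 : ℕ))) ξ ω
        - 2 * genSum (k + 4) (fun x y => alphaZ k (x - (2 : ℕ)) (y - (2 : ℕ))) ξ ω
        + genSum (k + 4) (fun x y => alphaZ k (x - (3 : ℕ)) (y - (3 : ℕ))) ξ ω := by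
    simp only [genSum, mul_sum, ← sum_add_distrib, ← sum_sub_distrib]
    refine sum_congr rfl fun x _ => sum_congr rfl fun y _ => ?_
    rw [alphaZ_recurrence hk]
    push_cast [sub_zero]
    ring
  rw [hsplit]
  simp (disch := omega) only [genSum_shift (alphaZ_eq_zero _)]
  ring

theorem trace_pow_add_three_of_pow_three {n R : Type*} [Fintype n] [DecidableEq n] [CommRing R]
    {A : Matrix n n R} {c₀ c₁ c₂ : R} (h : A ^ 3 = c₂ • A ^ 2 + c₁ • A + c₀ • 1) (m : ℕ) :
    (A ^ (m + 3)).trace =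
      c₂ * (A ^ (m + 2)).trace + c₁ * (A ^ (m + 1)).trace + c₀ * (A ^ m).trace := by
  rw [pow_add, h]
  simp only [mul_add, Matrix.mul_smul, Matrix.trace_add, Matrix.trace_smul, smul_eq_mul, ← pow_add,
    ← pow_succ, mul_one]

theorem T3_pow_three (ξ ω : ℂ) :
    T3 ξ ω ^ 3 = (1 + 3 * ξ * ω) • T3 ξ ω ^ 2 + (ξ * ω + ξ + ω - 3 * ξ ^ 2 * ω ^ 2) • T3 ξ ω
      + (ξ * ω * (ξ * ω - 1) ^ 2) • 1 := by
  ext i j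
  fin_cases i <;> fin_cases j <;>
    simp [T3, pow_succ, Matrix.mul_apply, Fin.sum_univ_three] <;> ring

theorem trace_T3_pow_eq_genSum_of_le_three {k : ℕ} (hk1 : 1 ≤ k) (hk3 : k ≤ 3) (ξ ω : ℂ) :
    (T3 ξ ω ^ k).trace = genSum (k + 1) (alphaZ k) ξ ω := by
  interval_cases k <;>
    simp [genSum, sum_range_succ, alphaZ, alphaAB, intChoose, T3, Matrix.trace_fin_three,
      pow_succ] <;>
    ring

theorem trace_T3_pow_eq_genSum {k : ℕ} (hk : 1 ≤ k) (ξ ω : ℂ) :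
    (T3 ξ ω ^ k).trace = genSum (k + 1) (alphaZ k) ξ ω := by
  induction k using Nat.strong_induction_on with
  | _ k ih =>
    rcases le_or_gt k 3 with hk3 | hk3
    · exact trace_T3_pow_eq_genSum_of_le_three hk hk3 ξ ω
    obtain ⟨k, rfl⟩ : ∃ j, k = j + 3 := ⟨k - 3, by omega⟩
    have hk : 1 ≤ k := by omega
    rw [trace_pow_add_three_of_pow_three (T3_pow_three ξ ω), ih k (by omega) hk,
      ih (k + 1) (by omega) (by omega), ih (k + 2) (by omega) (by omega),
      genSum_alphaZ_recurrence hk, genSum_eq_of_lt (alphaZ_eq_zero k) (by omega : k < k + 4),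
      genSum_eq_of_lt (alphaZ_eq_zero (k + 1)) (by omega : k + 1 < k + 4),
      genSum_eq_of_lt (alphaZ_eq_zero (k + 2)) (by omega : k + 2 < k + 4)]

/-- Closed-form expansion of the Rule 54 partition function `trace (T(ξ,ω)^k)` as a
polynomial in `ξ, ω` with (integral) coefficients `α_k(x,y)`. -/
theorem partition_function_expansion (k : ℕ) (hk : 1 ≤ k) :
    (∀ x y : ℕ, x ≤ k → y ≤ k → ∃ m : ℤ, alphaQ k x y = (m : ℚ)) ∧
    (∀ ξ ω : ℂ,
      Matrix.trace (T3 ξ ω ^ k) =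
        ∑ x ∈ Finset.range (k + 1), ∑ y ∈ Finset.range (k + 1),
          (alphaQ k x y : ℂ) * ξ ^ x * ω ^ y) := by
  refine ⟨fun x y _ _ => ⟨alphaZ k x y, alphaQ_eq_alphaZ hk x y⟩, fun ξ ω => ?_⟩
  simp only [trace_T3_pow_eq_genSum hk, genSum, alphaQ_eq_alphaZ hk, Rat.cast_intCast]

end Rule54
end

section
/- Yang–Yang form of the configurational entropy of Rule 54: Let n₊, n₋ ∈ (0,1) satisfy 2n₊ < 1 + n₋ and 2n₋ < 1 + n₊, and set n_ν^tot := 1 − n_ν + n_{−ν} for ν ∈ {+,−}. Then lim_{k→∞} (1/k)·log α_k(⌊k·n₊⌋, ⌊k·n₋⌋) = s[n₊,n₋], where s[n₊,n₋] := −Σ_{ν∈{+,−}} ( n_ν·log(n_ν/n_ν^tot) + (n_ν^tot − n_ν)·log(1 − n_ν/n_ν^tot) ). -/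
/-!
`α_k(x, y)` is a prefactor of polynomial size times the two binomial coefficients
`C(k+x−y, y)` and `C(k−x+y, x)`. Stirling's formula `log n! = n log n − n + o(n)` gives
`log C(n, r) = n·H(r/n) + o(k)` for `n, r` growing linearly in `k`, where `H` is the binary
entropy. With `x = ⌊k n₊⌋`, `y = ⌊k n₋⌋` the two binomials are therefore
`exp(k n₋^tot H(n₋/n₋^tot) + o(k))` and `exp(k n₊^tot H(n₊/n₊^tot) + o(k))`, and
`n^tot·H(n/n^tot)` is precisely the Yang–Yang summand.
-/

open Filter Topology

namespace Rule54

open Asymptotics Real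

section LinearGrowth

variable {a b : ℕ → ℕ} {A B : ℝ}

lemma eventually_lt_of_tendsto_div (hBA : B < A)
    (ha : Tendsto (fun k => (a k : ℝ) / k) atTop (𝓝 A))
    (hb : Tendsto (fun k => (b k : ℝ) / k) atTop (𝓝 B)) :
    ∀ᶠ k in atTop, b k < a k := by
  filter_upwards [ha.eventually (eventually_gt_nhds (add_div_two_lt_right.2 hBA)),
    hb.eventually (eventually_lt_nhds (left_lt_add_div_two.2 hBA)), eventually_gt_atTop 0]
    with k hak hbk hk
  exact_mod_cast (div_lt_div_iff_of_pos_right (by positivity)).1 (hbk.trans hak)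

lemma tendsto_atTop_of_tendsto_div (hA : 0 < A)
    (ha : Tendsto (fun k => (a k : ℝ) / k) atTop (𝓝 A)) :
    Tendsto a atTop atTop := by
  refine tendsto_natCast_atTop_iff.1
    ((ha.pos_mul_atTop hA tendsto_natCast_atTop_atTop).congr' ?_)
  filter_upwards [eventually_ne_atTop 0] with k hk
  field_simp

lemma tendsto_comp_div_of_isLittleO {g : ℕ → ℝ} (hg : g =o[atTop] (fun n : ℕ => (n : ℝ)))
    (hA : 0 < A) (ha : Tendsto (fun k => (a k : ℝ) / k) atTop (𝓝 A)) :
    Tendsto (fun k => g (a k) / k) atTop (𝓝 0) := by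
  have hbig : (fun k => (a k : ℝ)) =O[atTop] (fun k : ℕ => (k : ℝ)) :=
    isBigO_of_div_tendsto_nhds ((eventually_ne_atTop 0).mono fun k hk h0 =>
      absurd h0 (Nat.cast_ne_zero.2 hk)) A ha
  exact ((hg.comp_tendsto (tendsto_atTop_of_tendsto_div hA ha)).trans_isBigO hbig
    ).tendsto_div_nhds_zero

lemma tendsto_natCast_div_self : Tendsto (fun k : ℕ => (k : ℝ) / k) atTop (𝓝 1) :=
  tendsto_const_nhds.congr' <| by
    filter_upwards [eventually_ne_atTop 0] with k hk
    field_simp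

lemma tendsto_natCast_add_div
    (ha : Tendsto (fun k => (a k : ℝ) / k) atTop (𝓝 A))
    (hb : Tendsto (fun k => (b k : ℝ) / k) atTop (𝓝 B)) :
    Tendsto (fun k => ((a k + b k : ℕ) : ℝ) / k) atTop (𝓝 (A + B)) :=
  (ha.add hb).congr fun k => by push_cast; ring

lemma tendsto_natCast_sub_div (hBA : B < A)
    (ha : Tendsto (fun k => (a k : ℝ) / k) atTop (𝓝 A))
    (hb : Tendsto (fun k => (b k : ℝ) / k) atTop (𝓝 B)) :
    Tendsto (fun k => ((a k - b k : ℕ) : ℝ) / k) atTop (𝓝 (A - B)) :=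
  (ha.sub hb).congr' <| by
    filter_upwards [eventually_lt_of_tendsto_div hBA ha hb] with k hk
    rw [Nat.cast_sub hk.le, sub_div]

end LinearGrowth

noncomputable def logFactorialError (n : ℕ) : ℝ := Real.log n.factorial - (n * Real.log n - n)

lemma isLittleO_logFactorialError :
    logFactorialError =o[atTop] (fun n : ℕ => (n : ℝ)) := by
  have hn : Tendsto (fun n : ℕ => ‖(n : ℝ)‖) atTop atTop :=
    tendsto_norm_atTop_atTop.comp tendsto_natCast_atTop_atTop
  have hstirling :
      (fun n : ℕ => Real.log (Stirling.stirlingSeq n)) =o[atTop] (fun n : ℕ => (n : ℝ)) :=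
    ((Stirling.tendsto_stirlingSeq_sqrt_pi.log (by positivity)).isBigO_one ℝ).trans_isLittleO
      ((isLittleO_one_left_iff ℝ).2 hn)
  have hlog : (fun n : ℕ => Real.log n) =o[atTop] (fun n : ℕ => (n : ℝ)) :=
    isLittleO_log_id_atTop.comp_tendsto tendsto_natCast_atTop_atTop
  have hconst : (fun _ : ℕ => Real.log 2) =o[atTop] (fun n : ℕ => (n : ℝ)) :=
    isLittleO_const_left.2 (Or.inr hn)
  refine (hstirling.add ((hconst.add hlog).const_mul_left (1 / 2))).congr' ?_ EventuallyEq.rfl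
  filter_upwards [eventually_ne_atTop 0] with n hn0
  have hn : (0 : ℝ) < n := by positivity
  have hD : (0 : ℝ) < √(2 * n) * (n / exp 1) ^ n := by positivity
  have hS : Stirling.stirlingSeq n * (√(2 * n) * (n / exp 1) ^ n) = n.factorial :=
    div_mul_cancel₀ _ hD.ne'
  have hSpos : 0 < Stirling.stirlingSeq n := by
    rw [Stirling.stirlingSeq]; positivity
  rw [logFactorialError, ← hS, Real.log_mul hSpos.ne' hD.ne',
    Real.log_mul (by positivity) (by positivity), Real.log_sqrt (by positivity),
    Real.log_mul two_ne_zero hn.ne', Real.log_pow,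
    Real.log_div hn.ne' (exp_ne_zero 1), Real.log_exp]
  ring

lemma log_choose_eq_mul_binEntropy {n r : ℕ} (hr : 0 < r) (hrn : r < n) :
    Real.log (n.choose r) = n * binEntropy (r / n)
      + logFactorialError n - logFactorialError r - logFactorialError (n - r) := by
  have hn : (0 : ℝ) < n := by exact_mod_cast hr.trans hrn
  have hr' : (0 : ℝ) < r := by positivity
  have hnr : (0 : ℝ) < ((n - r : ℕ) : ℝ) := by simp [hrn]
  have hfact : (n.choose r : ℝ) * r.factorial * (n - r).factorial = n.factorial := by
    exact_mod_cast Nat.choose_mul_factorial_mul_factorial hrn.le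
  have hchoose : (0 : ℝ) < n.choose r := by exact_mod_cast Nat.choose_pos hrn.le
  have hlog : Real.log n.factorial
      = Real.log (n.choose r) + Real.log r.factorial + Real.log (n - r).factorial := by
    rw [← hfact, Real.log_mul (by positivity) (by positivity),
      Real.log_mul hchoose.ne' (by positivity)]
  have hent : n * binEntropy (r / n)
      = n * Real.log n - r * Real.log r - (n - r : ℕ) * Real.log (n - r : ℕ) := by
    rw [Nat.cast_sub hrn.le] at hnr ⊢
    rw [binEntropy, one_sub_div hn.ne', inv_div, inv_div, Real.log_div hn.ne' hr'.ne',
      Real.log_div hn.ne' hnr.ne']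
    field_simp
    ring
  rw [hent, logFactorialError, logFactorialError, logFactorialError, hlog, Nat.cast_sub hrn.le]
  ring

lemma tendsto_log_choose_div {n r : ℕ → ℕ} {N R : ℝ} (hR : 0 < R) (hRN : R < N)
    (hn : Tendsto (fun k => (n k : ℝ) / k) atTop (𝓝 N))
    (hr : Tendsto (fun k => (r k : ℝ) / k) atTop (𝓝 R)) :
    Tendsto (fun k => Real.log ((n k).choose (r k)) / k) atTop
      (𝓝 (N * binEntropy (R / N))) := by
  have hN : 0 < N := hR.trans hRN
  have hentropy : Tendsto (fun k => (n k : ℝ) / k * binEntropy ((r k / k) / (n k / k))) atTop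
      (𝓝 (N * binEntropy (R / N))) :=
    hn.mul ((binEntropy_continuous.tendsto _).comp (hr.div hn hN.ne'))
  have herror {a : ℕ → ℕ} {A : ℝ} :=
    @tendsto_comp_div_of_isLittleO a A _ isLittleO_logFactorialError
  have hlim := ((hentropy.add (herror hN hn)).sub (herror hR hr)).sub
    (herror (sub_pos.2 hRN) (tendsto_natCast_sub_div hRN hn hr))
  rw [add_zero, sub_zero, sub_zero] at hlim
  refine hlim.congr' ?_
  filter_upwards [(tendsto_atTop_of_tendsto_div hR hr).eventually_gt_atTop 0,
    eventually_lt_of_tendsto_div hRN hn hr, eventually_ne_atTop 0] with k hr0 hrn hk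
  rw [log_choose_eq_mul_binEntropy hr0 hrn, div_div_div_cancel_right₀ (by exact_mod_cast hk)]
  ring

lemma log_alphaQ_eq {k x y : ℕ} (hy : y < k + x - y) (hx : x < k + y - x) :
    Real.log (alphaQ k x y : ℝ)
      = Real.log ((k : ℝ) * (k + x + y : ℕ) / ((k + x - y : ℕ) * (k + y - x : ℕ)))
        + Real.log ((k + x - y).choose y) + Real.log ((k + y - x).choose x) := by
  have hcond : 0 < (k : ℤ) + x - y ∧ 0 < (k : ℤ) - x + y := by omega
  have hn₁ : ((k : ℤ) + x - y).toNat = k + x - y := by omega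
  have hn₂ : ((k : ℤ) - x + y).toNat = k + y - x := by omega
  have hz₁ : (k : ℤ) + x - y = ((k + x - y : ℕ) : ℤ) := by omega
  have hz₂ : (k : ℤ) - x + y = ((k + y - x : ℕ) : ℤ) := by omega
  have hk : 0 < k := by omega
  have hC₁ : 0 < (k + x - y).choose y := Nat.choose_pos (by omega)
  have hC₂ : 0 < (k + y - x).choose x := Nat.choose_pos (by omega)
  have hprefactor :
      (0 : ℝ) < (k : ℝ) * (k + x + y : ℕ) / ((k + x - y : ℕ) * (k + y - x : ℕ)) := by
    have : 0 < k + x - y := by omega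
    have : 0 < k + y - x := by omega
    positivity
  rw [alphaQ, if_pos hcond, hn₁, hn₂, hz₁, hz₂,
    ← Real.log_mul hprefactor.ne' (by positivity),
    ← Real.log_mul (by positivity) (by positivity)]
  push_cast
  ring_nf

theorem tendsto_log_alphaQ_div {x y : ℕ → ℕ} {X Y : ℝ} (hX : 0 < X) (hY : 0 < Y)
    (hXY : 2 * X < 1 + Y) (hYX : 2 * Y < 1 + X)
    (hx : Tendsto (fun k => (x k : ℝ) / k) atTop (𝓝 X))
    (hy : Tendsto (fun k => (y k : ℝ) / k) atTop (𝓝 Y)) :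
    Tendsto (fun k => Real.log (alphaQ k (x k) (y k) : ℝ) / k) atTop
      (𝓝 ((1 - Y + X) * binEntropy (Y / (1 - Y + X))
        + (1 - X + Y) * binEntropy (X / (1 - X + Y)))) := by
  have hn₁ : Tendsto (fun k => ((k + x k - y k : ℕ) : ℝ) / k) atTop (𝓝 (1 - Y + X)) := by
    rw [sub_add_eq_add_sub]
    exact tendsto_natCast_sub_div (by linarith)
      (tendsto_natCast_add_div tendsto_natCast_div_self hx) hy
  have hn₂ : Tendsto (fun k => ((k + y k - x k : ℕ) : ℝ) / k) atTop (𝓝 (1 - X + Y)) := by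
    rw [sub_add_eq_add_sub]
    exact tendsto_natCast_sub_div (by linarith)
      (tendsto_natCast_add_div tendsto_natCast_div_self hy) hx
  have hm : Tendsto (fun k => ((k + x k + y k : ℕ) : ℝ) / k) atTop (𝓝 (1 + X + Y)) :=
    tendsto_natCast_add_div (tendsto_natCast_add_div tendsto_natCast_div_self hx) hy
  have hprefactor : Tendsto (fun k : ℕ => Real.log ((k : ℝ) * (k + x k + y k : ℕ)
      / ((k + x k - y k : ℕ) * (k + y k - x k : ℕ))) / k) atTop (𝓝 0) := by
    have hN₁ : 0 < 1 - Y + X := by linarith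
    have hN₂ : 0 < 1 - X + Y := by linarith
    have hlim := ((tendsto_natCast_div_self.mul hm).div (hn₁.mul hn₂) (by positivity)).log
      (by positivity)
    refine (hlim.div_atTop tendsto_natCast_atTop_atTop).congr' ?_
    filter_upwards [eventually_ne_atTop 0] with k hk
    rw [Pi.div_apply]
    field_simp
  have hlim := (hprefactor.add (tendsto_log_choose_div hY (by linarith) hn₁ hy)).add
    (tendsto_log_choose_div hX (by linarith) hn₂ hx)
  rw [zero_add] at hlim
  refine hlim.congr' ?_
  filter_upwards [eventually_lt_of_tendsto_div (by linarith) hn₁ hy,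
    eventually_lt_of_tendsto_div (by linarith) hn₂ hx] with k h₁ h₂
  rw [log_alphaQ_eq h₁ h₂]
  ring

lemma mul_binEntropy_div {N : ℝ} (hN : N ≠ 0) (R : ℝ) :
    N * binEntropy (R / N) = -(R * Real.log (R / N) + (N - R) * Real.log (1 - R / N)) := by
  rw [binEntropy, Real.log_inv, Real.log_inv]
  field_simp
  ring

theorem configurational_entropy_yang_yang_general (np nm : ℝ)
    (hnp0 : 0 < np) (hnm0 : 0 < nm)
    (hp : 2 * np < 1 + nm) (hm : 2 * nm < 1 + np) :
    Tendsto
      (fun k : ℕ =>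
        Real.log ((alphaQ k ⌊(k : ℝ) * np⌋₊ ⌊(k : ℝ) * nm⌋₊ : ℚ) : ℝ) / k)
      atTop
      (𝓝 (-(np * Real.log (np / (1 - np + nm))
            + ((1 - np + nm) - np) * Real.log (1 - np / (1 - np + nm))
            + nm * Real.log (nm / (1 - nm + np))
            + ((1 - nm + np) - nm) * Real.log (1 - nm / (1 - nm + np))))) := by
  have hfloor {n : ℝ} (hn : 0 < n) :
      Tendsto (fun k : ℕ => (⌊(k : ℝ) * n⌋₊ : ℝ) / k) atTop (𝓝 n) := by
    simpa only [Function.comp_def, mul_comm n] using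
      (tendsto_nat_floor_mul_div_atTop hn.le).comp tendsto_natCast_atTop_atTop
  convert tendsto_log_alphaQ_div hnp0 hnm0 hp hm (hfloor hnp0) (hfloor hnm0) using 2
  rw [mul_binEntropy_div (by linarith), mul_binEntropy_div (by linarith)]
  ring

/-- Yang–Yang form of the configurational entropy of Rule 54: the exponential growth rate
of `α_k(⌊k n₊⌋, ⌊k n₋⌋)` is the entropy density `s[n₊,n₋]`. -/
theorem configurational_entropy_yang_yang (np nm : ℝ)
    (hnp0 : 0 < np) (hnp1 : np < 1) (hnm0 : 0 < nm) (hnm1 : nm < 1)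
    (hp : 2 * np < 1 + nm) (hm : 2 * nm < 1 + np) :
    Tendsto
      (fun k : ℕ =>
        Real.log ((alphaQ k ⌊(k : ℝ) * np⌋₊ ⌊(k : ℝ) * nm⌋₊ : ℚ) : ℝ) / k)
      atTop
      (𝓝 (-(np * Real.log (np / (1 - np + nm))
            + ((1 - np + nm) - np) * Real.log (1 - np / (1 - np + nm))
            + nm * Real.log (nm / (1 - nm + np))
            + ((1 - nm + np) - nm) * Real.log (1 - nm / (1 - nm + np))))) :=
  configurational_entropy_yang_yang_general np nm hnp0 hnm0 hp hm

end Rule54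
end

section
/- Dressed velocities of Rule 54 solitons: Let n₊, n₋ ≥ 0 be real numbers. Then the system of equations 1 − v₊ = (v₊ − v₋)·n₋ and 1 + v₋ = (v₊ − v₋)·n₊ has a unique solution (v₊, v₋) ∈ ℝ², namely v₊ = 1 − 2n₋/(1 + n₊ + n₋) and v₋ = −(1 − 2n₊/(1 + n₊ + n₋)). If, in addition, ϑ₊, ϑ₋ ∈ [0,1] satisfy n_ν = ϑ_ν·(1 − n_ν + n_{−ν}) for ν ∈ {+,−}, then v₊ = 1/(1 + 2ϑ₋) and v₋ = −1/(1 + 2ϑ₊). -/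
/-!
Adding the two kinematic equations gives `(v₊ - v₋)(1 + n₊ + n₋) = 2`, so the velocity gap is
`2/(1 + n₊ + n₋)` and each equation then yields one velocity. For the filling functions,
`1 - 2n₋/(1 + n₊ + n₋) = (1 + n₊ - n₋)/(1 + n₊ + n₋)`, and the relation `n₋ = ϑ₋ (1 + n₊ - n₋)`
says exactly that `(1 + n₊ - n₋)(1 + 2ϑ₋) = 1 + n₊ + n₋`.
-/

theorem velocity_gap_mul_eq_two {a b : ℝ} {v : ℝ × ℝ}
    (h₁ : 1 - v.1 = (v.1 - v.2) * b) (h₂ : 1 + v.2 = (v.1 - v.2) * a) :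
    (v.1 - v.2) * (1 + a + b) = 2 := by
  linarith

theorem dressing_equations_iff {a b : ℝ} (hD : 1 + a + b ≠ 0) (v : ℝ × ℝ) :
    (1 - v.1 = (v.1 - v.2) * b ∧ 1 + v.2 = (v.1 - v.2) * a) ↔
      v = (1 - 2 * b / (1 + a + b), -(1 - 2 * a / (1 + a + b))) := by
  constructor
  · rintro ⟨h₁, h₂⟩
    have hgap : v.1 - v.2 = 2 / (1 + a + b) :=
      eq_div_of_mul_eq hD (velocity_gap_mul_eq_two h₁ h₂)
    ext
    · linarith [show 2 * b / (1 + a + b) = (v.1 - v.2) * b by rw [hgap]; ring]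
    · linarith [show 2 * a / (1 + a + b) = (v.1 - v.2) * a by rw [hgap]; ring]
  · rintro rfl
    constructor <;> (field_simp; ring)

theorem one_sub_two_mul_div_eq_one_div_of_filling {a b ϑ : ℝ} (hD : 1 + a + b ≠ 0)
    (hϑ : b = ϑ * (1 - b + a)) :
    1 - 2 * b / (1 + a + b) = 1 / (1 + 2 * ϑ) := by
  have hprod : (1 + a - b) * (1 + 2 * ϑ) = 1 + a + b := by linarith
  have hnum : 1 + a - b ≠ 0 := left_ne_zero_of_mul (hprod ▸ hD)
  calc 1 - 2 * b / (1 + a + b) = (1 + a - b) / (1 + a + b) := by field_simp; ring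
    _ = (1 + a - b) / ((1 + a - b) * (1 + 2 * ϑ)) := by rw [hprod]
    _ = 1 / (1 + 2 * ϑ) := by rw [div_mul_cancel_left₀ hnum, one_div]

/-- Dressed velocities of Rule 54 solitons: the kinematic equations
`1 − v₊ = (v₊ − v₋)n₋` and `1 + v₋ = (v₊ − v₋)n₊` have the unique solution
`v₊ = 1 − 2n₋/(1+n₊+n₋)`, `v₋ = −(1 − 2n₊/(1+n₊+n₋))`; in terms of the filling
functions `ϑ_ν` these read `v₊ = 1/(1+2ϑ₋)`, `v₋ = −1/(1+2ϑ₊)`. -/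
theorem rule54_dressed_velocities (np nm : ℝ) (hnp : 0 ≤ np) (hnm : 0 ≤ nm) :
    (∀ v : ℝ × ℝ,
        (1 - v.1 = (v.1 - v.2) * nm ∧ 1 + v.2 = (v.1 - v.2) * np) ↔
          v = (1 - 2 * nm / (1 + np + nm), -(1 - 2 * np / (1 + np + nm)))) ∧
    (∀ ϑp ϑm : ℝ, ϑp ∈ Set.Icc (0 : ℝ) 1 → ϑm ∈ Set.Icc (0 : ℝ) 1 →
        np = ϑp * (1 - np + nm) → nm = ϑm * (1 - nm + np) →
        1 - 2 * nm / (1 + np + nm) = 1 / (1 + 2 * ϑm) ∧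
        -(1 - 2 * np / (1 + np + nm)) = -(1 / (1 + 2 * ϑp))) := by
  have hD : 1 + np + nm ≠ 0 := by positivity
  refine ⟨dressing_equations_iff hD, fun ϑp ϑm _ _ hp hm => ⟨?_, ?_⟩⟩
  · exact one_sub_two_mul_div_eq_one_div_of_filling hD hm
  · rw [add_right_comm] at hD ⊢
    rw [one_sub_two_mul_div_eq_one_div_of_filling hD hp]
end

section
/- Structure of the time-state transfer matrix: Let p_r, p_l ∈ ℝ and let A₀, A₁, A′₀, A′₁, ⟨L|, |R⟩ be the time-state matrices and vectors. Then: (i) (A₀+A₁)|R⟩ = |R⟩ and (A′₀+A′₁)|R⟩ = |R⟩; (ii) ⟨L|(A₀+A₁)(A′₀+A′₁) = ⟨L| and ⟨L|R⟩ = 1 (for 1 + p_r + p_l ≠ 0); (iii) the characteristic polynomial of the transfer matrix M := (A′₀+A′₁)(A₀+A₁) factorizes as det(λ·I₃ − M) = (λ − 1)·(λ² + (p_l + p_r − p_l·p_r)·λ + p_l·p_r); in particular the eigenvalues of M are 1 and Λ_{1,2} = −(1/2)·( p_l + p_r − p_l p_r ∓ √((p_l + p_r − p_l p_r)² − 4 p_l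 p_r) ), which govern the exponential decay of one-site multi-time correlation functions in the generalized Gibbs states of Rule 54. -/
/-!
`A₀ + A₁` is the row-stochastic matrix `T p = [[1−p,p,0],[0,0,1],[1,0,0]]` with `p = p_r`, and the
primed sum is `T p_l`. Row-stochasticity makes `|R⟩` fixed. The row vector `(1,q,p)` is sent to
`(1,p,q)` by `T p`, so `(1,p_l,p_r)` is fixed by `T p_r · T p_l`. The characteristic polynomial is
a direct `3 × 3` determinant, valid over any commutative ring, and the two `Λ`'s are the roots of
its quadratic factor because `√Δ ^ 2 = Δ` for the principal complex square root.
-/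

namespace Rule54

/-- Time-state matrix `A₀ = [[1−p_r,0,0],[0,0,0],[1,0,0]]`. -/
noncomputable def A0 (pr pl : ℝ) : Matrix (Fin 3) (Fin 3) ℝ :=
  !![1 - pr, 0, 0; 0, 0, 0; 1, 0, 0]

/-- Time-state matrix `A₁ = [[0,p_r,0],[0,0,1],[0,0,0]]`. -/
noncomputable def A1 (pr pl : ℝ) : Matrix (Fin 3) (Fin 3) ℝ :=
  !![0, pr, 0; 0, 0, 1; 0, 0, 0]

/-- Left boundary vector `⟨L| = (1/(1+p_r+p_l))·(1, p_l, p_r)`. -/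
noncomputable def Lvec (pr pl : ℝ) : Fin 3 → ℝ := (1 / (1 + pr + pl)) • ![1, pl, pr]

/-- Right boundary vector `|R⟩ = (1,1,1)ᵀ`. -/
def Rvec : Fin 3 → ℝ := ![1, 1, 1]

open Matrix

def stepMatrix {R : Type*} [Ring R] (p : R) : Matrix (Fin 3) (Fin 3) R :=
  !![1 - p, p, 0; 0, 0, 1; 1, 0, 0]

theorem A0_add_A1 (pr pl : ℝ) : A0 pr pl + A1 pr pl = stepMatrix pr := by
  ext i j
  fin_cases i <;> fin_cases j <;> simp [A0, A1, stepMatrix]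

section Ring

variable {R : Type*} [Ring R]

theorem stepMatrix_mulVec_ones (p : R) : stepMatrix p *ᵥ ![1, 1, 1] = ![1, 1, 1] := by
  ext i
  fin_cases i <;> simp [stepMatrix, mulVec, dotProduct, Fin.sum_univ_three]

theorem vecMul_stepMatrix (p q : R) : ![1, q, p] ᵥ* stepMatrix p = ![1, p, q] := by
  ext i
  fin_cases i <;> simp [stepMatrix, vecMul, dotProduct, Fin.sum_univ_three]

theorem vecMul_stepMatrix_mul_stepMatrix (p q : R) :
    ![1, q, p] ᵥ* (stepMatrix p * stepMatrix q) = ![1, q, p] := by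
  rw [← vecMul_vecMul, vecMul_stepMatrix, vecMul_stepMatrix]

theorem stepMatrix_map {S : Type*} [Ring S] (f : R →+* S) (p : R) :
    (stepMatrix p).map f = stepMatrix (f p) := by
  ext i j
  fin_cases i <;> fin_cases j <;> simp [stepMatrix]

end Ring

theorem det_smul_one_sub_stepMatrix_mul {R : Type*} [CommRing R] (p q μ : R) :
    (μ • (1 : Matrix (Fin 3) (Fin 3) R) - stepMatrix p * stepMatrix q).det =
      (μ - 1) * (μ ^ 2 + (p + q - p * q) * μ + p * q) := by
  simp [stepMatrix, det_fin_three]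
  ring

theorem Lvec_dotProduct_Rvec {pr pl : ℝ} (h : 1 + pr + pl ≠ 0) : Lvec pr pl ⬝ᵥ Rvec = 1 := by
  rw [Lvec, Rvec, smul_dotProduct, smul_eq_mul, one_div, inv_mul_eq_one₀ h]
  simp only [dotProduct, Fin.sum_univ_three, cons_val_zero, cons_val_one, cons_val, mul_one]
  ring

/-- Structure of the time-state transfer matrix of Rule 54 (the primed matrices are
`A′_s = A_s` with `p_r` and `p_l` interchanged):
(i) `|R⟩` is a fixed right vector; (ii) `⟨L|` is a fixed left vector with `⟨L|R⟩ = 1`;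
(iii) the characteristic polynomial of `M = (A′₀+A′₁)(A₀+A₁)` factorizes as
`(λ−1)(λ² + (p_l+p_r−p_l p_r)λ + p_l p_r)`, so the eigenvalues of `M` are `1` and
`Λ_{1,2} = −(1/2)(p_l+p_r−p_l p_r ∓ √((p_l+p_r−p_l p_r)² − 4 p_l p_r))`. -/
theorem time_state_transfer_matrix (pr pl : ℝ) :
    ((A0 pr pl + A1 pr pl).mulVec Rvec = Rvec ∧
      (A0 pl pr + A1 pl pr).mulVec Rvec = Rvec) ∧
    (1 + pr + pl ≠ 0 →
      Matrix.vecMul (Lvec pr pl) ((A0 pr pl + A1 pr pl) * (A0 pl pr + A1 pl pr))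
          = Lvec pr pl ∧
      dotProduct (Lvec pr pl) Rvec = 1) ∧
    (∀ lam : ℝ,
      Matrix.det (lam • (1 : Matrix (Fin 3) (Fin 3) ℝ)
          - (A0 pl pr + A1 pl pr) * (A0 pr pl + A1 pr pl)) =
        (lam - 1) * (lam ^ 2 + (pl + pr - pl * pr) * lam + pl * pr)) ∧
    (let Mc : Matrix (Fin 3) (Fin 3) ℂ :=
        ((A0 pl pr + A1 pl pr) * (A0 pr pl + A1 pr pl)).map (fun a : ℝ => (a : ℂ));
      let b : ℂ := (pl : ℂ) + (pr : ℂ) - (pl : ℂ) * (pr : ℂ);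
      let sq : ℂ := (b ^ 2 - 4 * (pl : ℂ) * (pr : ℂ)) ^ ((1 : ℂ) / 2);
      Matrix.det ((1 : ℂ) • (1 : Matrix (Fin 3) (Fin 3) ℂ) - Mc) = 0 ∧
      Matrix.det ((-(1 / 2) * (b - sq)) • (1 : Matrix (Fin 3) (Fin 3) ℂ) - Mc) = 0 ∧
      Matrix.det ((-(1 / 2) * (b + sq)) • (1 : Matrix (Fin 3) (Fin 3) ℂ) - Mc) = 0) := by
  have hM : (A0 pl pr + A1 pl pr) * (A0 pr pl + A1 pr pl) = stepMatrix pl * stepMatrix pr := by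
    rw [A0_add_A1, A0_add_A1]
  refine ⟨⟨?_, ?_⟩, fun h => ⟨?_, Lvec_dotProduct_Rvec h⟩, fun lam => ?_, ?_⟩
  · rw [A0_add_A1]; exact stepMatrix_mulVec_ones pr
  · rw [A0_add_A1]; exact stepMatrix_mulVec_ones pl
  · rw [A0_add_A1, A0_add_A1, Lvec, smul_vecMul, vecMul_stepMatrix_mul_stepMatrix]
  · rw [hM, det_smul_one_sub_stepMatrix_mul]
  · intro Mc b sq
    have hMc : Mc = stepMatrix (pl : ℂ) * stepMatrix (pr : ℂ) := by
      change ((A0 pl pr + A1 pl pr) * (A0 pr pl + A1 pr pl)).map Complex.ofRealHom = _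
      rw [hM, Matrix.map_mul, stepMatrix_map, stepMatrix_map]
      rfl
    have hsq : sq ^ 2 = b ^ 2 - 4 * pl * pr := by simp [sq]
    simp only [hMc, det_smul_one_sub_stepMatrix_mul]
    refine ⟨by ring, ?_, ?_⟩
    · linear_combination (-(1 / 2) * (b - sq) - 1) / 4 * hsq
    · linear_combination (-(1 / 2) * (b + sq) - 1) / 4 * hsq

end Rule54
end
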